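/- If r = 4 then U_n³ + U_{n+1}³ < U_{3n+1} for all n ≥ 1. -/

import Mathlib

/-! The addition formula `U (m + n + 1) = U (m + 1) U (n + 1) + U m U n` expands `U (3n + 1)`
as a cubic form in `a = U (n - 1)`, `b = U n`, `c = U (n + 1) = 4b + a`; it exceeds `b³ + c³`
by `b² (2c + a - b)`, which is positive because `c ≥ 4b > 0`. -/

def U (r : ℕ) : ℕ → ℕ
  | 0 => 0
  | 1 => 1
  | n + 2 => r * U r (n + 1) + U r n

def V (r : ℕ) : ℕ → ℕ
  | 0 => 2
  | 1 => r
  | n + 2 => r * V r (n + 1) + V r n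

theorem U_add_two (r n : ℕ) : U r (n + 2) = r * U r (n + 1) + U r n := rfl

theorem U_add (r m n : ℕ) : U r (m + n + 1) = U r (m + 1) * U r (n + 1) + U r m * U r n := by
  induction n generalizing m with
  | zero => simp [U]
  | succ n ih =>
    rw [show m + (n + 1) + 1 = m + 1 + n + 1 by ring, ih, U_add_two, U_add_two]
    ring

theorem U_two_mul_add_one (r n : ℕ) : U r (2 * n + 1) = U r (n + 1) ^ 2 + U r n ^ 2 := by
  rw [two_mul, U_add]
  ring

theorem U_two_mul_add_two (r n : ℕ) :
    U r (2 * n + 2) = U r (n + 1) * (U r (n + 2) + U r n) := by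
  rw [show 2 * n + 2 = (n + 1) + n + 1 by ring, U_add]
  ring

theorem U_pos {r : ℕ} (hr : 0 < r) (n : ℕ) : 0 < U r (n + 1) := by
  induction n with
  | zero => simp [U]
  | succ n ih =>
    rw [U_add_two]
    positivity

theorem stmt_19 (n : ℕ) (hn : 1 ≤ n) :
    U 4 n ^ 3 + U 4 (n + 1) ^ 3 < U 4 (3 * n + 1) := by
  obtain ⟨k, rfl⟩ : ∃ k, n = k + 1 := ⟨n - 1, by omega⟩
  have h_expand : U 4 (3 * (k + 1) + 1) =
      U 4 (2 * k + 3) * U 4 (k + 2) + U 4 (2 * k + 2) * U 4 (k + 1) := by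
    rw [show 3 * (k + 1) + 1 = (2 * k + 2) + (k + 1) + 1 by ring, U_add]
  have h_odd : U 4 (2 * k + 3) = U 4 (k + 2) ^ 2 + U 4 (k + 1) ^ 2 := U_two_mul_add_one 4 (k + 1)
  have h_rec : U 4 (k + 2) = 4 * U 4 (k + 1) + U 4 k := U_add_two 4 k
  have h_pos : 0 < U 4 (k + 1) := U_pos (by norm_num) k
  rw [h_expand, h_odd, U_two_mul_add_two]
  nlinarith [Nat.zero_le (U 4 k), mul_pos h_pos h_pos]
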